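/- arXiv:1912.10705 — 6 statements merged into one kernel-verified Lean document; each statement's English description precedes it below -/
import Mathlib

section
/- Let K be a field equipped with a δ-operator d_K, and let H be a commutative Hopf algebra over K with comultiplication Δ, counit ε, and multiplication m, equipped with an additive map δ : H → H satisfying δ(xy) = δ(x)y + x δ(y) for all x, y ∈ H and δ(a • h) = d_K(a) • h + a • δ(h) for all a ∈ K, h ∈ H. Then for every ε-derivation D : H → K, the map δ_D : H → H defined by δ_D(h) = δ(h) + m((D ⊗ id_H)(Δ(h))) is again additive and satisfies δ_D(xy) = δ_D(x)y + x δ_D(y) for all x, y ∈ H and δ_D(a • h) = d_K(a) • h + a • δ_D(h) for all a ∈ K, h ∈ H. -/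
open TensorProduct

/-- The map `h ↦ D(h₍₁₎)h₍₂₎`, i.e. `m ∘ (D ⊗ id_H) ∘ Δ` with `K` embedded in `H`. -/
noncomputable def PhiMap {K H : Type*} [Field K] [CommRing H] [HopfAlgebra K H]
    (D : H →ₗ[K] K) : H →ₗ[K] H :=
  LinearMap.mul' K H ∘ₗ
    TensorProduct.map (Algebra.linearMap K H ∘ₗ D) (LinearMap.id : H →ₗ[K] H) ∘ₗ
      (Coalgebra.comul (R := K) (A := H))

section Aux

variable {K H : Type*} [Field K] [CommRing H] [HopfAlgebra K H]

noncomputable def Fmap (D : H →ₗ[K] K) : H ⊗[K] H →ₗ[K] H :=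
  LinearMap.mul' K H ∘ₗ
    TensorProduct.map (Algebra.linearMap K H ∘ₗ D) (LinearMap.id : H →ₗ[K] H)

lemma Fmap_mul (D E : H →ₗ[K] K)
    (hDE : ∀ x y : H, D (x * y) = D x * E y + E x * D y)
    (t u : H ⊗[K] H) :
    Fmap D (t * u) = Fmap D t * Fmap E u + Fmap E t * Fmap D u := by
  induction t using TensorProduct.induction_on with
  | zero => simp
  | tmul x1 x2 =>
    induction u using TensorProduct.induction_on with
    | zero => simp
    | tmul y1 y2 =>
      simp only [Fmap, Algebra.TensorProduct.tmul_mul_tmul, LinearMap.comp_apply,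
        TensorProduct.map_tmul, LinearMap.mul'_apply, LinearMap.id_apply, hDE,
        Algebra.linearMap_apply, map_add, add_mul, map_mul]
      ring
    | add u1 u2 h1 h2 =>
      simp only [mul_add, map_add, h1, h2]
      ring
  | add t1 t2 h1 h2 =>
    simp only [add_mul, map_add, h1, h2]
    ring

lemma Fmap_counit_comul (x : H) :
    Fmap (Coalgebra.counit : H →ₗ[K] K) (Coalgebra.comul (R := K) x) = x := by
  have h := Coalgebra.rTensor_counit_comul (R := K) x
  have hm : (TensorProduct.map (Algebra.linearMap K H ∘ₗ (Coalgebra.counit : H →ₗ[K] K))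
        (LinearMap.id : H →ₗ[K] H))
      = (TensorProduct.map (Algebra.linearMap K H) (LinearMap.id : H →ₗ[K] H)) ∘ₗ
        (TensorProduct.map (Coalgebra.counit : H →ₗ[K] K) (LinearMap.id : H →ₗ[K] H)) := by
    rw [← TensorProduct.map_comp, LinearMap.id_comp]
  simp only [Fmap, LinearMap.comp_apply, hm]
  rw [show (TensorProduct.map (Coalgebra.counit : H →ₗ[K] K) (LinearMap.id : H →ₗ[K] H))
      (Coalgebra.comul (R := K) x)
      = LinearMap.rTensor H (Coalgebra.counit : H →ₗ[K] K) (Coalgebra.comul (R := K) x) from rfl,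
    h]
  simp

lemma PhiMap_eq (D : H →ₗ[K] K) (x : H) :
    PhiMap D x = Fmap D (Coalgebra.comul (R := K) x) := rfl

end Aux

/-- If `δ` is a δ-operator on a commutative Hopf algebra `H` over a differential field
`(K, dK)` and `D : H → K` is an ε-derivation, then `δ_D : h ↦ δ h + D(h₍₁₎)h₍₂₎` is again
additive, satisfies the Leibniz rule, and is compatible with `dK`. -/
theorem stmt_5 {K H : Type*} [Field K] [CommRing H] [HopfAlgebra K H]
    (dK : K → K) (hdK_add : ∀ x y : K, dK (x + y) = dK x + dK y)
    (hdK_mul : ∀ x y : K, dK (x * y) = dK x * y + x * dK y)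
    (δ : H → H) (hδ_add : ∀ x y : H, δ (x + y) = δ x + δ y)
    (hδ_mul : ∀ x y : H, δ (x * y) = δ x * y + x * δ y)
    (hδ_smul : ∀ (a : K) (h : H), δ (a • h) = dK a • h + a • δ h)
    (D : H →ₗ[K] K)
    (hD : ∀ x y : H, D (x * y) = D x * Coalgebra.counit y + Coalgebra.counit x * D y) :
    (∀ x y : H, δ (x + y) + PhiMap D (x + y) = (δ x + PhiMap D x) + (δ y + PhiMap D y)) ∧
    (∀ x y : H, δ (x * y) + PhiMap D (x * y)
      = (δ x + PhiMap D x) * y + x * (δ y + PhiMap D y)) ∧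
    (∀ (a : K) (h : H), δ (a • h) + PhiMap D (a • h)
      = dK a • h + a • (δ h + PhiMap D h)) := by
  refine ⟨fun x y => by rw [hδ_add, map_add]; ring, fun x y => ?_, fun a h => by
    rw [hδ_smul, map_smul, smul_add]; ring⟩
  have key : PhiMap D (x * y) = PhiMap D x * y + x * PhiMap D y := by
    rw [PhiMap_eq, PhiMap_eq, Bialgebra.comul_mul,
      Fmap_mul D (Coalgebra.counit : H →ₗ[K] K) hD,
      Fmap_counit_comul, Fmap_counit_comul, ← PhiMap_eq D x, ← PhiMap_eq D y]
  rw [hδ_mul, key]; ring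
end

section
/- Let C be a field, g₀ a Lie algebra over C, R a commutative C-algebra equipped with a C-linear derivation d : R → R, and C_R = {x ∈ R : d(x) = 0} the C-subalgebra of constants. Consider the group G of R-Lie algebra automorphisms φ of g₀ ⊗_C R satisfying φ ∘ (id_{g₀} ⊗ d) = (id_{g₀} ⊗ d) ∘ φ. Then every φ ∈ G maps the canonical image of g₀ ⊗_C C_R in g₀ ⊗_C R bijectively onto itself, inducing a C_R-Lie algebra automorphism ψ of g₀ ⊗_C C_R, and the assignment φ ↦ ψ is a group isomorphism from G onto the group of C_R-Lie algebra automorphisms of g₀ ⊗_C C_R (the inverse sends ψ to its base extension along C_R → R). -/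
open TensorProduct

set_option synthInstance.maxHeartbeats 1000000
set_option maxHeartbeats 1000000

def constants {C R : Type*} [Field C] [CommRing R] [Algebra C R]
    (d : R →ₗ[C] R) (hd : ∀ x y : R, d (x * y) = d x * y + x * d y) : Subalgebra C R where
  carrier := {x | d x = 0}
  add_mem' := by
    intro a b ha hb
    show d (a + b) = 0
    rw [map_add, show d a = 0 from ha, show d b = 0 from hb, add_zero]
  mul_mem' := by
    intro a b ha hb
    show d (a * b) = 0
    rw [hd a b, show d a = 0 from ha, show d b = 0 from hb, zero_mul, mul_zero, add_zero]
  algebraMap_mem' := by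
    intro c
    show d (algebraMap C R c) = 0
    have h : d 1 = d 1 + d 1 := by
      have h' := hd 1 1
      rwa [mul_one, mul_one, one_mul] at h'
    have h1 : d 1 = 0 := by
      have h2 : d 1 + 0 = d 1 + d 1 := by rw [add_zero]; exact h
      exact (add_left_cancel h2).symm
    rw [Algebra.algebraMap_eq_smul_one, map_smul, h1, smul_zero]

namespace Stmt7

variable {C : Type*} [Field C] {g₀ : Type*} [LieRing g₀] [LieAlgebra C g₀]
    {R : Type*} [CommRing R] [Algebra C R]
    (d : R →ₗ[C] R) (hd : ∀ x y : R, d (x * y) = d x * y + x * d y)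

local notation "K" => constants d hd

/-- The canonical map. -/
noncomputable abbrev ι2 : ↥K ⊗[C] g₀ →ₗ[C] R ⊗[C] g₀ :=
  LinearMap.rTensor g₀ ((constants d hd).val.toLinearMap)

lemma ι2_tmul (k : ↥K) (x : g₀) : ι2 d hd (k ⊗ₜ x) = (k : R) ⊗ₜ x := rfl

lemma ι2_inj : Function.Injective (ι2 (g₀ := g₀) d hd) :=
  Module.Flat.rTensor_preserves_injective_linearMap _ Subtype.val_injective

lemma ι2_smul (c : ↥K) (y : ↥K ⊗[C] g₀) :
    ι2 d hd (c • y) = (c : R) • ι2 d hd y := by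
  induction y using TensorProduct.induction_on with
  | zero => simp
  | tmul k x => simp [smul_tmul', ι2_tmul, Submonoid.smul_def, smul_eq_mul]
  | add a b ha hb => rw [smul_add, map_add, ha, hb, map_add, smul_add]

lemma ι2_lie (a b : ↥K ⊗[C] g₀) :
    ι2 d hd ⁅a, b⁆ = ⁅ι2 d hd a, ι2 d hd b⁆ := by
  induction a using TensorProduct.induction_on with
  | zero =>
    calc ι2 d hd ⁅(0 : ↥K ⊗[C] g₀), b⁆ = ι2 d hd 0 := congrArg _ (zero_lie b)
      _ = 0 := map_zero _
      _ = ⁅0, ι2 d hd b⁆ := (zero_lie _).symm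
      _ = ⁅ι2 d hd 0, ι2 d hd b⁆ := by rw [map_zero]
  | tmul k x =>
    induction b using TensorProduct.induction_on with
    | zero =>
      calc ι2 d hd ⁅k ⊗ₜ[C] x, (0 : ↥K ⊗[C] g₀)⁆ = ι2 d hd 0 :=
            congrArg _ (show ⁅k ⊗ₜ[C] x, (0 : ↥K ⊗[C] g₀)⁆ = 0 from lie_zero (M := ↥K ⊗[C] g₀) (k ⊗ₜ[C] x))
        _ = 0 := map_zero _
        _ = ⁅ι2 d hd (k ⊗ₜ[C] x), 0⁆ := (lie_zero _).symm
        _ = ⁅ι2 d hd (k ⊗ₜ[C] x), ι2 d hd 0⁆ := by rw [map_zero]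
    | tmul l y =>
      calc ι2 d hd ⁅k ⊗ₜ[C] x, l ⊗ₜ[C] y⁆ = ι2 d hd ((k * l) ⊗ₜ ⁅x, y⁆) := rfl
        _ = ((k : R) * (l : R)) ⊗ₜ ⁅x, y⁆ := rfl
        _ = ⁅(k : R) ⊗ₜ[C] x, (l : R) ⊗ₜ[C] y⁆ := rfl
        _ = ⁅ι2 d hd (k ⊗ₜ[C] x), ι2 d hd (l ⊗ₜ[C] y)⁆ := rfl
    | add s t hs ht =>
      calc ι2 d hd ⁅k ⊗ₜ[C] x, s + t⁆
          = ι2 d hd (⁅k ⊗ₜ[C] x, s⁆ + ⁅k ⊗ₜ[C] x, t⁆) :=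
            congrArg _ (show ⁅k ⊗ₜ[C] x, s + t⁆ = ⁅k ⊗ₜ[C] x, s⁆ + ⁅k ⊗ₜ[C] x, t⁆ from
              lie_add (M := ↥K ⊗[C] g₀) (k ⊗ₜ[C] x) s t)
        _ = ι2 d hd ⁅k ⊗ₜ[C] x, s⁆ + ι2 d hd ⁅k ⊗ₜ[C] x, t⁆ := map_add _ _ _
        _ = ⁅ι2 d hd (k ⊗ₜ[C] x), ι2 d hd s⁆ + ⁅ι2 d hd (k ⊗ₜ[C] x), ι2 d hd t⁆ := by
            rw [hs, ht]
        _ = ⁅ι2 d hd (k ⊗ₜ[C] x), ι2 d hd s + ι2 d hd t⁆ := (lie_add _ _ _).symm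
        _ = ⁅ι2 d hd (k ⊗ₜ[C] x), ι2 d hd (s + t)⁆ := by rw [map_add]
  | add s t hs ht =>
    calc ι2 d hd ⁅s + t, b⁆
        = ι2 d hd (⁅s, b⁆ + ⁅t, b⁆) := congrArg _ (add_lie s t b)
      _ = ι2 d hd ⁅s, b⁆ + ι2 d hd ⁅t, b⁆ := map_add _ _ _
      _ = ⁅ι2 d hd s, ι2 d hd b⁆ + ⁅ι2 d hd t, ι2 d hd b⁆ := by rw [hs, ht]
      _ = ⁅ι2 d hd s + ι2 d hd t, ι2 d hd b⁆ := (add_lie _ _ _).symm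
      _ = ⁅ι2 d hd (s + t), ι2 d hd b⁆ := by rw [map_add]

lemma D_ι2 (y : ↥K ⊗[C] g₀) : LinearMap.rTensor g₀ d (ι2 d hd y) = 0 := by
  rw [← LinearMap.comp_apply, ← LinearMap.rTensor_comp]
  have : d.comp ((constants d hd).val.toLinearMap) = 0 := by
    ext k; exact k.2
  rw [this, LinearMap.rTensor_zero, LinearMap.zero_apply]

lemma mem_range_of_D (z : R ⊗[C] g₀) (h : LinearMap.rTensor g₀ d z = 0) :
    z ∈ Set.range (ι2 (g₀ := g₀) d hd) := by
  have hexact : Function.Exact ((constants d hd).val.toLinearMap) d := by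
    intro y
    constructor
    · intro hy; exact ⟨⟨y, hy⟩, rfl⟩
    · rintro ⟨⟨c, hc⟩, rfl⟩; exact hc
  exact (Module.Flat.rTensor_exact g₀ hexact z).mp h

lemma D_smul_ι2 (a : R) (z : ↥K ⊗[C] g₀) :
    LinearMap.rTensor g₀ d (a • ι2 d hd z) = d a • ι2 d hd z := by
  induction z using TensorProduct.induction_on with
  | zero => simp
  | tmul k x =>
    rw [ι2_tmul, smul_tmul', smul_tmul', smul_eq_mul, smul_eq_mul,
      LinearMap.rTensor_tmul, hd, show d (k : R) = 0 from k.2, mul_zero, add_zero]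
  | add s t hs ht =>
    rw [map_add, smul_add, map_add, hs, ht, smul_add]

/-- The group in question, as a subtype. -/
abbrev G := {φ : R ⊗[C] g₀ ≃ₗ⁅R⁆ R ⊗[C] g₀ //
    ∀ x, φ (LinearMap.rTensor g₀ d x) = LinearMap.rTensor g₀ d (φ x)}

variable {d}

lemma exists_res (φ : G (g₀ := g₀) d) (y : ↥K ⊗[C] g₀) :
    ∃ z, ι2 d hd z = φ.1 (ι2 d hd y) := by
  have h : LinearMap.rTensor g₀ d (φ.1 (ι2 d hd y)) = 0 := by
    rw [← φ.2, D_ι2 d hd y]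
    exact φ.1.toLinearEquiv.map_zero
  exact mem_range_of_D d hd _ h

noncomputable def res (φ : G (g₀ := g₀) d) (y : ↥K ⊗[C] g₀) : ↥K ⊗[C] g₀ :=
  (exists_res hd φ y).choose

lemma res_spec (φ : G (g₀ := g₀) d) (y : ↥K ⊗[C] g₀) :
    ι2 d hd (res hd φ y) = φ.1 (ι2 d hd y) :=
  (exists_res hd φ y).choose_spec

def inv (φ : G (g₀ := g₀) d) : G (g₀ := g₀) d :=
  ⟨φ.1.symm, fun x => by
    have h1 : φ.1 (φ.1.symm (LinearMap.rTensor g₀ d x)) = LinearMap.rTensor g₀ d x :=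
      φ.1.apply_symm_apply _
    have h2 : φ.1 (LinearMap.rTensor g₀ d (φ.1.symm x)) = LinearMap.rTensor g₀ d x := by
      rw [φ.2 (φ.1.symm x), LieEquiv.apply_symm_apply]
    exact φ.1.injective (h1.trans h2.symm)⟩

noncomputable def ΨΨ (φ : G (g₀ := g₀) d) : ↥K ⊗[C] g₀ ≃ₗ⁅↥K⁆ ↥K ⊗[C] g₀ where
  toFun := res hd φ
  map_add' a b := ι2_inj d hd <| by
    calc ι2 d hd (res hd φ (a + b)) = φ.1 (ι2 d hd (a + b)) := res_spec hd φ _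
      _ = φ.1 (ι2 d hd a + ι2 d hd b) := by rw [map_add]
      _ = φ.1 (ι2 d hd a) + φ.1 (ι2 d hd b) := φ.1.toLinearEquiv.map_add _ _
      _ = ι2 d hd (res hd φ a) + ι2 d hd (res hd φ b) := by rw [res_spec, res_spec]
      _ = ι2 d hd (res hd φ a + res hd φ b) := (map_add _ _ _).symm
  map_smul' c a := ι2_inj d hd <| by
    calc ι2 d hd (res hd φ (c • a)) = φ.1 (ι2 d hd (c • a)) := res_spec hd φ _
      _ = φ.1 ((c : R) • ι2 d hd a) := by rw [ι2_smul]
      _ = (c : R) • φ.1 (ι2 d hd a) := φ.1.toLinearEquiv.map_smul _ _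
      _ = (c : R) • ι2 d hd (res hd φ a) := by rw [res_spec]
      _ = ι2 d hd (c • res hd φ a) := (ι2_smul d hd _ _).symm
  map_lie' {a b} := ι2_inj d hd <| by
    calc ι2 d hd (res hd φ ⁅a, b⁆) = φ.1 (ι2 d hd ⁅a, b⁆) := res_spec hd φ _
      _ = φ.1 ⁅ι2 d hd a, ι2 d hd b⁆ := by rw [ι2_lie]
      _ = ⁅φ.1 (ι2 d hd a), φ.1 (ι2 d hd b)⁆ := φ.1.map_lie _ _
      _ = ⁅ι2 d hd (res hd φ a), ι2 d hd (res hd φ b)⁆ := by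
          rw [res_spec, res_spec]
      _ = ι2 d hd ⁅res hd φ a, res hd φ b⁆ := (ι2_lie d hd _ _).symm
  invFun := res hd (inv φ)
  left_inv y := ι2_inj d hd <| by
    rw [res_spec hd (inv φ), res_spec hd φ]
    exact φ.1.symm_apply_apply _
  right_inv y := ι2_inj d hd <| by
    rw [res_spec hd φ, res_spec hd (inv φ)]
    exact φ.1.apply_symm_apply _

lemma eq_of_res_eq {φ₁ φ₂ : G (g₀ := g₀) d}
    (h : ∀ y, res hd φ₁ y = res hd φ₂ y) : φ₁ = φ₂ := by
  apply Subtype.ext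
  apply LieEquiv.ext
  intro x
  induction x using TensorProduct.induction_on with
  | zero => exact φ₁.1.toLinearEquiv.map_zero.trans φ₂.1.toLinearEquiv.map_zero.symm
  | tmul a x =>
    have h1 : (a ⊗ₜ[C] x : R ⊗[C] g₀) = a • ι2 d hd ((1 : ↥K) ⊗ₜ x) := by
      rw [ι2_tmul, smul_tmul', smul_eq_mul, OneMemClass.coe_one, mul_one]
    have h2 : φ₁.1 (ι2 d hd ((1 : ↥K) ⊗ₜ x)) = φ₂.1 (ι2 d hd ((1 : ↥K) ⊗ₜ x)) := by
      rw [← res_spec, ← res_spec, h]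
    show φ₁.1 _ = φ₂.1 _
    rw [h1]
    calc φ₁.1 (a • ι2 d hd ((1 : ↥K) ⊗ₜ x))
        = a • φ₁.1 (ι2 d hd ((1 : ↥K) ⊗ₜ x)) := φ₁.1.toLinearEquiv.map_smul _ _
      _ = a • φ₂.1 (ι2 d hd ((1 : ↥K) ⊗ₜ x)) := by rw [h2]
      _ = φ₂.1 (a • ι2 d hd ((1 : ↥K) ⊗ₜ x)) := (φ₂.1.toLinearEquiv.map_smul _ _).symm
  | add s t hs ht =>
    show φ₁.1 _ = φ₂.1 _
    calc φ₁.1 (s + t) = φ₁.1 s + φ₁.1 t := φ₁.1.toLinearEquiv.map_add _ _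
      _ = φ₂.1 s + φ₂.1 t := by rw [hs, ht]
      _ = φ₂.1 (s + t) := (φ₂.1.toLinearEquiv.map_add _ _).symm


section Surj

/-- `x ↦ ι2 (ψ (1 ⊗ x))`. -/
noncomputable def uMap (ψ : ↥K ⊗[C] g₀ ≃ₗ⁅↥K⁆ ↥K ⊗[C] g₀) : g₀ →ₗ[C] R ⊗[C] g₀ :=
  (ι2 d hd) ∘ₗ (ψ.toLinearEquiv.toLinearMap.restrictScalars C) ∘ₗ (TensorProduct.mk C ↥K g₀ 1)

/-- The base extension of `ψ` to `R`. -/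
noncomputable def philin (ψ : ↥K ⊗[C] g₀ ≃ₗ⁅↥K⁆ ↥K ⊗[C] g₀) : R ⊗[C] g₀ →ₗ[R] R ⊗[C] g₀ :=
  LinearMap.liftBaseChange R (uMap hd ψ)

lemma philin_tmul (ψ : ↥K ⊗[C] g₀ ≃ₗ⁅↥K⁆ ↥K ⊗[C] g₀) (a : R) (x : g₀) :
    philin hd ψ (a ⊗ₜ x) = a • ι2 d hd (ψ ((1 : ↥K) ⊗ₜ x)) := by
  rw [philin, LinearMap.liftBaseChange_tmul]
  rfl

lemma philin_ι2 (ψ : ↥K ⊗[C] g₀ ≃ₗ⁅↥K⁆ ↥K ⊗[C] g₀) (z : ↥K ⊗[C] g₀) :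
    philin hd ψ (ι2 d hd z) = ι2 d hd (ψ z) := by
  induction z using TensorProduct.induction_on with
  | zero =>
    rw [map_zero, map_zero]
    rw [show ψ (0 : ↥K ⊗[C] g₀) = 0 from ψ.toLinearEquiv.map_zero, map_zero]
  | tmul c x =>
    have h1 : (c • ((1 : ↥K) ⊗ₜ[C] x) : ↥K ⊗[C] g₀) = c ⊗ₜ x := by
      rw [smul_tmul', smul_eq_mul, mul_one]
    calc philin hd ψ (ι2 d hd (c ⊗ₜ x)) = philin hd ψ ((c : R) ⊗ₜ x) := rfl
      _ = (c : R) • ι2 d hd (ψ ((1 : ↥K) ⊗ₜ x)) := philin_tmul hd ψ _ _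
      _ = ι2 d hd (c • ψ ((1 : ↥K) ⊗ₜ x)) := (ι2_smul d hd _ _).symm
      _ = ι2 d hd (ψ (c • ((1 : ↥K) ⊗ₜ x))) := by
          rw [show ψ (c • ((1 : ↥K) ⊗ₜ[C] x)) = c • ψ ((1 : ↥K) ⊗ₜ[C] x) from
            ψ.toLinearEquiv.map_smul c _]
      _ = ι2 d hd (ψ (c ⊗ₜ x)) := by rw [h1]
  | add s t hs ht =>
    rw [map_add, map_add, hs, ht,
      show ψ (s + t) = ψ s + ψ t from ψ.toLinearEquiv.map_add s t, map_add]

lemma philin_inv (ψ : ↥K ⊗[C] g₀ ≃ₗ⁅↥K⁆ ↥K ⊗[C] g₀) (w : R ⊗[C] g₀) :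
    philin hd ψ.symm (philin hd ψ w) = w := by
  induction w using TensorProduct.induction_on with
  | zero => rw [map_zero, map_zero]
  | tmul a x =>
    rw [philin_tmul, map_smul, philin_ι2,
      show ψ.symm (ψ ((1 : ↥K) ⊗ₜ x)) = (1 : ↥K) ⊗ₜ x from ψ.symm_apply_apply _,
      show ι2 d hd ((1 : ↥K) ⊗ₜ[C] x) = (1 : R) ⊗ₜ x by rw [ι2_tmul, OneMemClass.coe_one],
      smul_tmul', smul_eq_mul, mul_one]
  | add s t hs ht => rw [map_add, map_add, hs, ht]

lemma philin_lie (ψ : ↥K ⊗[C] g₀ ≃ₗ⁅↥K⁆ ↥K ⊗[C] g₀) (s t : R ⊗[C] g₀) :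
    philin hd ψ ⁅s, t⁆ = ⁅philin hd ψ s, philin hd ψ t⁆ := by
  induction s using TensorProduct.induction_on with
  | zero =>
    calc philin hd ψ ⁅(0 : R ⊗[C] g₀), t⁆ = philin hd ψ 0 :=
          congrArg _ (show ⁅(0 : R ⊗[C] g₀), t⁆ = 0 from zero_lie t)
      _ = 0 := map_zero _
      _ = ⁅0, philin hd ψ t⁆ := (show ⁅(0 : R ⊗[C] g₀), philin hd ψ t⁆ = 0 from zero_lie _).symm
      _ = ⁅philin hd ψ 0, philin hd ψ t⁆ := by rw [map_zero]
  | tmul a x =>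
    induction t using TensorProduct.induction_on with
    | zero =>
      calc philin hd ψ ⁅a ⊗ₜ[C] x, (0 : R ⊗[C] g₀)⁆ = philin hd ψ 0 :=
            congrArg _ (show ⁅a ⊗ₜ[C] x, (0 : R ⊗[C] g₀)⁆ = 0 from
              lie_zero (M := R ⊗[C] g₀) (a ⊗ₜ[C] x))
        _ = 0 := map_zero _
        _ = ⁅philin hd ψ (a ⊗ₜ[C] x), 0⁆ := (show ⁅philin hd ψ (a ⊗ₜ[C] x), (0 : R ⊗[C] g₀)⁆ = 0
              from lie_zero (M := R ⊗[C] g₀) _).symm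
        _ = ⁅philin hd ψ (a ⊗ₜ[C] x), philin hd ψ 0⁆ := by rw [map_zero]
    | tmul b y =>
      have hb : (⁅(1 : ↥K) ⊗ₜ[C] x, (1 : ↥K) ⊗ₜ[C] y⁆ : ↥K ⊗[C] g₀)
          = (1 : ↥K) ⊗ₜ[C] ⁅x, y⁆ := by
        rw [LieAlgebra.ExtendScalars.bracket_tmul, one_mul]
      calc philin hd ψ ⁅a ⊗ₜ[C] x, b ⊗ₜ[C] y⁆
          = philin hd ψ ((a * b) ⊗ₜ[C] ⁅x, y⁆) := by
            rw [LieAlgebra.ExtendScalars.bracket_tmul]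
        _ = (a * b) • ι2 d hd (ψ ((1 : ↥K) ⊗ₜ ⁅x, y⁆)) := philin_tmul hd ψ _ _
        _ = (a * b) • ι2 d hd (ψ ⁅(1 : ↥K) ⊗ₜ[C] x, (1 : ↥K) ⊗ₜ[C] y⁆) := by rw [hb]
        _ = (a * b) • ι2 d hd ⁅ψ ((1 : ↥K) ⊗ₜ[C] x), ψ ((1 : ↥K) ⊗ₜ[C] y)⁆ := by
            rw [ψ.map_lie]
        _ = (a * b) • ⁅ι2 d hd (ψ ((1 : ↥K) ⊗ₜ[C] x)), ι2 d hd (ψ ((1 : ↥K) ⊗ₜ[C] y))⁆ := by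
            rw [ι2_lie]
        _ = ⁅a • ι2 d hd (ψ ((1 : ↥K) ⊗ₜ[C] x)), b • ι2 d hd (ψ ((1 : ↥K) ⊗ₜ[C] y))⁆ := by
            rw [show (⁅a • ι2 d hd (ψ ((1 : ↥K) ⊗ₜ[C] x)),
                b • ι2 d hd (ψ ((1 : ↥K) ⊗ₜ[C] y))⁆ : R ⊗[C] g₀)
                = a • ⁅ι2 d hd (ψ ((1 : ↥K) ⊗ₜ[C] x)),
                b • ι2 d hd (ψ ((1 : ↥K) ⊗ₜ[C] y))⁆ from smul_lie a _ _,
              show (⁅ι2 d hd (ψ ((1 : ↥K) ⊗ₜ[C] x)),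
                b • ι2 d hd (ψ ((1 : ↥K) ⊗ₜ[C] y))⁆ : R ⊗[C] g₀)
                = b • ⁅ι2 d hd (ψ ((1 : ↥K) ⊗ₜ[C] x)),
                ι2 d hd (ψ ((1 : ↥K) ⊗ₜ[C] y))⁆ from lie_smul b _ _,
              smul_smul]
        _ = ⁅philin hd ψ (a ⊗ₜ[C] x), philin hd ψ (b ⊗ₜ[C] y)⁆ := by
            rw [philin_tmul, philin_tmul]
    | add u v hu hv =>
      calc philin hd ψ ⁅a ⊗ₜ[C] x, u + v⁆
          = philin hd ψ (⁅a ⊗ₜ[C] x, u⁆ + ⁅a ⊗ₜ[C] x, v⁆) :=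
            congrArg _ (show ⁅a ⊗ₜ[C] x, u + v⁆ = ⁅a ⊗ₜ[C] x, u⁆ + ⁅a ⊗ₜ[C] x, v⁆ from
              lie_add (M := R ⊗[C] g₀) (a ⊗ₜ[C] x) u v)
        _ = philin hd ψ ⁅a ⊗ₜ[C] x, u⁆ + philin hd ψ ⁅a ⊗ₜ[C] x, v⁆ := map_add _ _ _
        _ = ⁅philin hd ψ (a ⊗ₜ[C] x), philin hd ψ u⁆
              + ⁅philin hd ψ (a ⊗ₜ[C] x), philin hd ψ v⁆ := by rw [hu, hv]
        _ = ⁅philin hd ψ (a ⊗ₜ[C] x), philin hd ψ u + philin hd ψ v⁆ :=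
            (lie_add (M := R ⊗[C] g₀) _ _ _).symm
        _ = ⁅philin hd ψ (a ⊗ₜ[C] x), philin hd ψ (u + v)⁆ := by rw [map_add]
  | add u v hu hv =>
    calc philin hd ψ ⁅u + v, t⁆
        = philin hd ψ (⁅u, t⁆ + ⁅v, t⁆) := congrArg _ (add_lie u v t)
      _ = philin hd ψ ⁅u, t⁆ + philin hd ψ ⁅v, t⁆ := map_add _ _ _
      _ = ⁅philin hd ψ u, philin hd ψ t⁆ + ⁅philin hd ψ v, philin hd ψ t⁆ := by rw [hu, hv]
      _ = ⁅philin hd ψ u + philin hd ψ v, philin hd ψ t⁆ := (add_lie _ _ _).symm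
      _ = ⁅philin hd ψ (u + v), philin hd ψ t⁆ := by rw [map_add]

lemma philin_comm (ψ : ↥K ⊗[C] g₀ ≃ₗ⁅↥K⁆ ↥K ⊗[C] g₀) (w : R ⊗[C] g₀) :
    philin hd ψ (LinearMap.rTensor g₀ d w) = LinearMap.rTensor g₀ d (philin hd ψ w) := by
  induction w using TensorProduct.induction_on with
  | zero => rw [map_zero, map_zero, map_zero]
  | tmul a x =>
    rw [LinearMap.rTensor_tmul, philin_tmul, philin_tmul, D_smul_ι2]
  | add s t hs ht => rw [map_add, map_add, map_add, map_add, hs, ht]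

/-- The base extension of `ψ` as a Lie algebra automorphism commuting with the derivation. -/
noncomputable def phi (ψ : ↥K ⊗[C] g₀ ≃ₗ⁅↥K⁆ ↥K ⊗[C] g₀) : G (g₀ := g₀) d :=
  ⟨{ toLinearMap := philin hd ψ
     map_lie' := fun {s t} => philin_lie hd ψ s t
     invFun := philin hd ψ.symm
     left_inv := philin_inv hd ψ
     right_inv := fun w => by
       have h := philin_inv hd ψ.symm w
       rwa [LieEquiv.symm_symm] at h },
   fun x => philin_comm hd ψ x⟩

end Surj

end Stmt7

/-- Every automorphism of the differential `R`-Lie algebra `R ⊗[C] g₀` (with δ-operator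
`d ⊗ id`) maps the canonical image of `C_R ⊗[C] g₀` bijectively onto itself, inducing a
`C_R`-Lie algebra automorphism of `C_R ⊗[C] g₀`, and this assignment is a group isomorphism
onto the group of `C_R`-Lie algebra automorphisms of `C_R ⊗[C] g₀`. -/
theorem stmt_7 {C : Type*} [Field C] {g₀ : Type*} [LieRing g₀] [LieAlgebra C g₀]
    {R : Type*} [CommRing R] [Algebra C R]
    (d : R →ₗ[C] R) (hd : ∀ x y : R, d (x * y) = d x * y + x * d y) :
    ∃ Ψ : {φ : R ⊗[C] g₀ ≃ₗ⁅R⁆ R ⊗[C] g₀ //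
            ∀ x, φ (LinearMap.rTensor g₀ d x) = LinearMap.rTensor g₀ d (φ x)} →
          (↥(constants d hd) ⊗[C] g₀ ≃ₗ⁅↥(constants d hd)⁆ ↥(constants d hd) ⊗[C] g₀),
      Function.Bijective Ψ ∧
      (∀ φ : {φ : R ⊗[C] g₀ ≃ₗ⁅R⁆ R ⊗[C] g₀ //
            ∀ x, φ (LinearMap.rTensor g₀ d x) = LinearMap.rTensor g₀ d (φ x)},
        Set.BijOn φ.1
          (Set.range (LinearMap.rTensor g₀ ((constants d hd).val.toLinearMap)))
          (Set.range (LinearMap.rTensor g₀ ((constants d hd).val.toLinearMap))) ∧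
        (∀ y : ↥(constants d hd) ⊗[C] g₀,
          φ.1 (LinearMap.rTensor g₀ ((constants d hd).val.toLinearMap) y)
            = LinearMap.rTensor g₀ ((constants d hd).val.toLinearMap) (Ψ φ y))) ∧
      (∀ φ₁ φ₂ φ₃ : {φ : R ⊗[C] g₀ ≃ₗ⁅R⁆ R ⊗[C] g₀ //
            ∀ x, φ (LinearMap.rTensor g₀ d x) = LinearMap.rTensor g₀ d (φ x)},
        (∀ x, φ₃.1 x = φ₂.1 (φ₁.1 x)) → ∀ y, Ψ φ₃ y = Ψ φ₂ (Ψ φ₁ y)) := by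
  classical
  refine ⟨Stmt7.ΨΨ hd, ⟨?_, ?_⟩, ?_, ?_⟩
  · -- injective
    intro φ₁ φ₂ h
    exact Stmt7.eq_of_res_eq hd fun y => DFunLike.congr_fun h y
  · -- surjective
    intro ψ
    refine ⟨Stmt7.phi hd ψ, ?_⟩
    apply LieEquiv.ext
    intro y
    apply Stmt7.ι2_inj d hd
    show Stmt7.ι2 d hd (Stmt7.res hd (Stmt7.phi hd ψ) y) = Stmt7.ι2 d hd (ψ y)
    rw [Stmt7.res_spec hd (Stmt7.phi hd ψ) y]
    exact Stmt7.philin_ι2 hd ψ y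
  · -- BijOn and compat
    intro φ
    refine ⟨⟨?_, ?_, ?_⟩, ?_⟩
    · rintro _ ⟨y, rfl⟩
      exact ⟨Stmt7.res hd φ y, Stmt7.res_spec hd φ y⟩
    · exact φ.1.injective.injOn
    · rintro _ ⟨y, rfl⟩
      exact ⟨_, ⟨Stmt7.res hd (Stmt7.inv φ) y, rfl⟩, by
        rw [Stmt7.res_spec hd (Stmt7.inv φ) y]
        exact φ.1.apply_symm_apply _⟩
    · intro y
      exact (Stmt7.res_spec hd φ y).symm
  · -- multiplicativity
    intro φ₁ φ₂ φ₃ h y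
    apply Stmt7.ι2_inj d hd
    show Stmt7.ι2 d hd (Stmt7.res hd φ₃ y) = Stmt7.ι2 d hd (Stmt7.res hd φ₂ (Stmt7.res hd φ₁ y))
    rw [Stmt7.res_spec, Stmt7.res_spec, h, Stmt7.res_spec]
end

section
/- Let K be a field of characteristic zero containing a primitive cube root of unity. Let α ∈ K^× be an element that is not a square in K, let M = K(s) where s² = α (a quadratic field extension of K), and let σ denote the nontrivial K-automorphism of M. Suppose β ∈ M^× is not a cube in M but β·σ(β) is a cube in K^×. Then the field L = M(r) = K(s, r), where r³ = β, is a Galois extension of K of degree 6 whose Galois group Gal(L/K) is isomorphic to the symmetric group S₃ on three letters. -/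
/-!
Put `t = γ / r`, so that `r t = γ` and `t ^ 3 = σ β`. Then `r + t`, `ω r + ω² t` and `ω² r + ω t`
are the roots of the cubic `X ^ 3 - 3 γ X - (β + σ β)`, whose coefficients lie in `K`. These roots
generate `L` over `K`: the first two give `r`, and `r ^ 3 = β` gives `s` because `β ∉ K` (otherwise
`β ^ 2 = γ ^ 3` would make `β` a cube). Hence `L/K` is a splitting field, so Galois, of degree
`[L : M] [M : K] = 3 · 2 = 6`; its Galois group acts faithfully on the three roots, and having
order `6` it is all of `S₃`.
-/

open Polynomial

lemma nonempty_mulEquiv_perm_fin_three_of_injective {G α : Type*} [Group G] [Finite α]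
    {f : G →* Equiv.Perm α} (hf : Function.Injective f) (hα : Nat.card α ≤ 3)
    (hG : Nat.card G = 6) : Nonempty (G ≃* Equiv.Perm (Fin 3)) := by
  have hle : Nat.card G ≤ (Nat.card α).factorial :=
    Nat.card_perm (α := α) ▸ Nat.card_le_card_of_injective f hf
  have hα3 : Nat.card α = 3 := by
    by_contra hne
    have := Nat.factorial_le (show Nat.card α ≤ 2 by omega)
    simp only [Nat.factorial] at this
    omega
  have hbij : Function.Bijective f := by
    rw [Nat.bijective_iff_injective_and_card]
    exact ⟨hf, by rw [hG, Nat.card_perm, hα3]; rfl⟩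
  exact ⟨(MulEquiv.ofBijective f hbij).trans
    (Equiv.permCongrHom (Finite.equivFinOfCardEq hα3))⟩

lemma Polynomial.natCard_rootSet_le {F E : Type*} [Field F] [Field E] [Algebra F E] (p : F[X]) :
    Nat.card (p.rootSet E) ≤ p.natDegree := by
  classical
  rw [rootSet_def, Nat.card_coe_set_eq, Set.ncard_coe_finset]
  exact (Multiset.toFinset_card_le _).trans ((card_roots' _).trans natDegree_map_le)

lemma nonempty_mulEquiv_perm_fin_three_of_isSplittingField {F E : Type*} [Field F] [Field E]
    [Algebra F E] (p : F[X]) [IsSplittingField F E p] (hp : p.natDegree ≤ 3)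
    (hcard : Nat.card Gal(E/F) = 6) : Nonempty (Gal(E/F) ≃* Equiv.Perm (Fin 3)) := by
  have : Fact (p.map (algebraMap F E)).Splits := ⟨IsSplittingField.splits E p⟩
  exact nonempty_mulEquiv_perm_fin_three_of_injective (f := (Gal.galActionHom p E).comp
    (IsSplittingField.algEquiv E p).autCongr.toMonoidHom)
    ((Gal.galActionHom_injective p E).comp (MulEquiv.injective _))
    ((p.natCard_rootSet_le).trans hp) hcard

lemma finrank_eq_of_pow_eq_of_adjoin_eq_top {F E : Type*} [Field F] [Field E] [Algebra F E]
    {n : ℕ} (hn : n.Prime) {a : F} (ha : ¬∃ y : F, y ^ n = a) {x : E}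
    (hx : x ^ n = algebraMap F E a) (htop : Algebra.adjoin F {x} = ⊤) :
    Module.finrank F E = n := by
  have hirr : Irreducible (X ^ n - C a) :=
    X_pow_sub_C_irreducible_of_prime hn fun y hy ↦ ha ⟨y, hy⟩
  have hmonic : (X ^ n - C a).Monic := monic_X_pow_sub_C a hn.ne_zero
  have hroot : aeval x (X ^ n - C a) = 0 := by simp [hx]
  have hint : IsIntegral F x := ⟨_, hmonic, by rwa [← aeval_def]⟩
  rw [← IntermediateField.finrank_top', ← IntermediateField.adjoin_eq_top_of_algebra F {x} htop,
    IntermediateField.adjoin.finrank hint,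
    ← minpoly.eq_of_irreducible_of_monic hirr hroot hmonic, natDegree_X_pow_sub_C]

lemma exists_eq_add_mul_of_adjoin_eq_top {K A : Type*} [CommRing K] [CommRing A] [Algebra K A]
    {s : A} {α : K} (hs : s ^ 2 = algebraMap K A α) (htop : Algebra.adjoin K {s} = ⊤) (m : A) :
    ∃ a b : K, m = algebraMap K A a + algebraMap K A b * s := by
  induction (htop ▸ Algebra.mem_top : m ∈ Algebra.adjoin K {s}) using Algebra.adjoin_induction with
  | mem x hx =>
    rw [Set.mem_singleton_iff.mp hx]
    exact ⟨0, 1, by simp⟩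
  | algebraMap c => exact ⟨c, 0, by simp⟩
  | add x y _ _ hx hy =>
    obtain ⟨a₁, b₁, rfl⟩ := hx
    obtain ⟨a₂, b₂, rfl⟩ := hy
    exact ⟨a₁ + a₂, b₁ + b₂, by simp only [map_add]; ring⟩
  | mul x y _ _ hx hy =>
    obtain ⟨a₁, b₁, rfl⟩ := hx
    obtain ⟨a₂, b₂, rfl⟩ := hy
    refine ⟨a₁ * a₂ + b₁ * b₂ * α, a₁ * b₂ + b₁ * a₂, ?_⟩
    simp only [map_add, map_mul]
    linear_combination (algebraMap K A b₁ * algebraMap K A b₂) * hs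

lemma adjoin_pair_eq_top_of_adjoin_eq_top {K M L : Type*} [CommSemiring K] [CommSemiring M]
    [CommSemiring L] [Algebra K M] [Algebra K L] [Algebra M L] [IsScalarTower K M L] {s : M}
    {r : L} (hs : Algebra.adjoin K {s} = ⊤) (hr : Algebra.adjoin M {r} = ⊤) :
    Algebra.adjoin K {algebraMap M L s, r} = ⊤ := by
  set A := Algebra.adjoin K {algebraMap M L s, r}
  have hM : ∀ m : M, algebraMap M L m ∈ A := by
    have : (⊤ : Subalgebra K M).map (IsScalarTower.toAlgHom K M L) ≤ A := by
      rw [← hs, ← Algebra.adjoin_image, Set.image_singleton]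
      exact Algebra.adjoin_mono (by simp)
    exact fun m ↦ this ⟨m, trivial, rfl⟩
  rw [eq_top_iff]
  rintro x -
  induction (hr ▸ Algebra.mem_top : x ∈ Algebra.adjoin M {r}) using Algebra.adjoin_induction with
  | mem y hy => exact Algebra.subset_adjoin (by simp [Set.mem_singleton_iff.mp hy])
  | algebraMap m => exact hM m
  | add y z _ _ hy hz => exact A.add_mem hy hz
  | mul y z _ _ hy hz => exact A.mul_mem hy hz

lemma cardano_factorization {R : Type*} [CommRing R] {ω : R} (hω : ω ^ 2 + ω + 1 = 0)
    (x r t : R) :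
    (x - (r + t)) * (x - (ω * r + ω ^ 2 * t)) * (x - (ω ^ 2 * r + ω * t)) =
      x ^ 3 - 3 * (r * t) * x - (r ^ 3 + t ^ 3) := by
  linear_combination (t ^ 3 - t ^ 3 * ω - r * t ^ 2 * ω ^ 2 - r ^ 2 * t * ω ^ 2 + r ^ 3
    - r ^ 3 * ω + x * t ^ 2 * ω + 3 * x * r * t - x * r * t * ω + x * r * t * ω ^ 2
    + x * r ^ 2 * ω - x ^ 2 * t - x ^ 2 * r) * hω

lemma IsPrimitiveRoot.sq_add_self_add_one {R : Type*} [CommRing R] [IsDomain R] {ω : R}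
    (hω : IsPrimitiveRoot ω 3) : ω ^ 2 + ω + 1 = 0 := by
  have h := hω.geom_sum_eq_zero (by norm_num)
  simp only [Finset.sum_range_succ, Finset.sum_range_zero] at h
  linear_combination h

section Cardano

variable {K L : Type*} [Field K] [Field L] [Algebra K L] {ω γ e : K} {r t : L}

lemma map_cubic_eq_prod (hω : ω ^ 2 + ω + 1 = 0) (hrt : r * t = algebraMap K L γ)
    (hsum : r ^ 3 + t ^ 3 = algebraMap K L e) :
    (X ^ 3 - C (3 * γ) * X - C e).map (algebraMap K L) =
      (X - C (r + t)) * (X - C (algebraMap K L ω * r + algebraMap K L ω ^ 2 * t)) *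
        (X - C (algebraMap K L ω ^ 2 * r + algebraMap K L ω * t)) := by
  have hω' : C (algebraMap K L ω) ^ 2 + C (algebraMap K L ω) + 1 = 0 := by
    simpa using congr(C (algebraMap K L $hω))
  have hrt' : C r * C t = C (algebraMap K L γ) := by rw [← C_mul, hrt]
  have hsum' : C r ^ 3 + C t ^ 3 = C (algebraMap K L e) := by rw [← C_pow, ← C_pow, ← C_add, hsum]
  simp only [C_add, C_mul, C_pow]
  rw [cardano_factorization hω', hrt', hsum']
  simp [map_ofNat]

lemma isSplittingField_cubic (hω : IsPrimitiveRoot ω 3) (hrt : r * t = algebraMap K L γ)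
    (hsum : r ^ 3 + t ^ 3 = algebraMap K L e) (hr : Algebra.adjoin K {r} = ⊤) :
    IsSplittingField K L (X ^ 3 - C (3 * γ) * X - C e) := by
  have hfac := map_cubic_eq_prod hω.sq_add_self_add_one hrt hsum
  set q : K[X] := X ^ 3 - C (3 * γ) * X - C e
  have hroot : ∀ x : L, (q.map (algebraMap K L)).eval x = 0 → x ∈ q.rootSet L := fun x hx ↦
    mem_rootSet'.mpr ⟨by
      rw [hfac]
      exact mul_ne_zero (mul_ne_zero (X_sub_C_ne_zero _) (X_sub_C_ne_zero _)) (X_sub_C_ne_zero _),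
      by rwa [aeval_def, ← eval_map]⟩
  refine ⟨by rw [hfac]; exact ((Splits.X_sub_C _).mul (Splits.X_sub_C _)).mul (Splits.X_sub_C _),
    ?_⟩
  rw [eq_top_iff, ← hr, Algebra.adjoin_le_iff, Set.singleton_subset_iff]
  set A := Algebra.adjoin K (q.rootSet L)
  have h₀ : r + t ∈ A := Algebra.subset_adjoin (hroot _ (by simp [hfac]))
  have h₁ : algebraMap K L ω * r + algebraMap K L ω ^ 2 * t ∈ A :=
    Algebra.subset_adjoin (hroot _ (by simp [hfac]))
  have hne : algebraMap K L ω - algebraMap K L ω ^ 2 ≠ 0 := by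
    rw [← map_pow, ← map_sub, _root_.map_ne_zero, show ω - ω ^ 2 = ω * (1 - ω) by ring]
    exact mul_ne_zero (hω.ne_zero (by norm_num)) (sub_ne_zero.mpr (hω.ne_one (by norm_num)).symm)
  -- eliminate `t` between the roots `r + t` and `ω r + ω² t`
  have hr_eq : r = algebraMap K L (ω - ω ^ 2)⁻¹ *
      (algebraMap K L ω * r + algebraMap K L ω ^ 2 * t - algebraMap K L (ω ^ 2) * (r + t)) := by
    rw [map_inv₀, map_sub, map_pow, eq_inv_mul_iff_mul_eq₀ hne]
    ring
  rw [hr_eq]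
  exact A.mul_mem (A.algebraMap_mem _) (A.sub_mem h₁ (A.mul_mem (A.algebraMap_mem _) h₀))

end Cardano

lemma ne_algebraMap_of_mul_eq_cube {K M : Type*} [Field K] [Field M] [Algebra K M]
    (σ : M ≃ₐ[K] M) {β : M} (hβ : ¬∃ x : M, x ^ 3 = β) {γ : K}
    (hγ : β * σ β = algebraMap K M γ ^ 3) (a : K) : β ≠ algebraMap K M a := by
  rintro rfl
  have ha : a ≠ 0 := by
    rintro rfl
    exact hβ ⟨0, by simp⟩
  have hsq : a ^ 2 = γ ^ 3 := by
    apply (algebraMap K M).injective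
    rw [map_pow, map_pow, ← hγ, σ.commutes, sq]
  -- `a ^ 2 = γ ^ 3` makes `a = (γ ^ 2 / a) ^ 3`
  refine hβ ⟨algebraMap K M (γ ^ 2 / a), ?_⟩
  rw [← map_pow]
  congr 1
  field_simp
  linear_combination -(γ ^ 3 + a ^ 2) * hsq

lemma adjoin_eq_top_of_pow_eq_add_mul {K M L : Type*} [Field K] [CommRing M] [CommRing L]
    [Algebra K M] [Algebra K L] [Algebra M L] [IsScalarTower K M L] {s : M} {r : L} {n : ℕ}
    {a b : K} (hb : b ≠ 0) (hrn : r ^ n = algebraMap M L (algebraMap K M a + algebraMap K M b * s))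
    (hs : Algebra.adjoin K {s} = ⊤) (hr : Algebra.adjoin M {r} = ⊤) :
    Algebra.adjoin K {r} = ⊤ := by
  rw [eq_top_iff, ← adjoin_pair_eq_top_of_adjoin_eq_top hs hr, Algebra.adjoin_le_iff,
    Set.insert_subset_iff, Set.singleton_subset_iff]
  have hr_mem : r ∈ Algebra.adjoin K {r} := Algebra.self_mem_adjoin_singleton K r
  have hs_eq : algebraMap M L s = algebraMap K L b⁻¹ * (r ^ n - algebraMap K L a) := by
    rw [hrn, map_add, map_mul, ← IsScalarTower.algebraMap_apply, ← IsScalarTower.algebraMap_apply,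
      add_sub_cancel_left, ← mul_assoc, ← map_mul, inv_mul_cancel₀ hb, map_one, one_mul]
  rw [hs_eq]
  exact ⟨Subalgebra.mul_mem _ (Subalgebra.algebraMap_mem _ _)
    (Subalgebra.sub_mem _ (Subalgebra.pow_mem _ hr_mem n) (Subalgebra.algebraMap_mem _ _)), hr_mem⟩

theorem stmt_8_general {K : Type*} [Field K] [CharZero K] (ω : K) (hω : IsPrimitiveRoot ω 3)
    {M : Type*} [Field M] [Algebra K M]
    (α : K) (hα : ¬∃ x : K, x ^ 2 = α)
    (s : M) (hs : s ^ 2 = algebraMap K M α) (hMgen : Algebra.adjoin K {s} = ⊤)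
    (σ : M ≃ₐ[K] M) (hσ : σ s = -s)
    {L : Type*} [Field L] [Algebra K L] [Algebra M L] [IsScalarTower K M L]
    (β : M) (hβ : ¬∃ x : M, x ^ 3 = β)
    (hββ : ∃ γ : K, γ ≠ 0 ∧ β * σ β = algebraMap K M γ ^ 3)
    (r : L) (hr : r ^ 3 = algebraMap M L β) (hLgen : Algebra.adjoin M {r} = ⊤) :
    IsGalois K L ∧ Module.finrank K L = 6 ∧
      Nonempty ((L ≃ₐ[K] L) ≃* Equiv.Perm (Fin 3)) := by
  obtain ⟨γ, -, hγ⟩ := hββ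
  obtain ⟨a, b, hab⟩ := exists_eq_add_mul_of_adjoin_eq_top hs hMgen β
  have hb : b ≠ 0 := by
    rintro rfl
    exact ne_algebraMap_of_mul_eq_cube σ hβ hγ a (by simpa using hab)
  have hfinrank : Module.finrank K L = 6 := by
    rw [← Module.finrank_mul_finrank K M L,
      finrank_eq_of_pow_eq_of_adjoin_eq_top Nat.prime_two hα hs hMgen,
      finrank_eq_of_pow_eq_of_adjoin_eq_top Nat.prime_three hβ hr hLgen]
  have hr0 : r ≠ 0 := by
    rintro rfl
    exact hβ ⟨0, (algebraMap M L).injective (by rw [← hr]; simp)⟩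
  have htrace : β + σ β = algebraMap K M (2 * a) := by
    rw [hab, map_add, map_mul, σ.commutes, σ.commutes, hσ, map_mul, map_ofNat]
    ring
  have hcube : (algebraMap K L γ / r) ^ 3 = algebraMap M L (σ β) := by
    rw [div_pow, div_eq_iff (pow_ne_zero 3 hr0), hr, IsScalarTower.algebraMap_apply K M L,
      ← map_pow, ← hγ, map_mul, mul_comm]
  have hsum : r ^ 3 + (algebraMap K L γ / r) ^ 3 = algebraMap K L (2 * a) := by
    rw [hcube, hr, ← map_add, htrace, ← IsScalarTower.algebraMap_apply]
  have hKr : Algebra.adjoin K {r} = ⊤ :=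
    adjoin_eq_top_of_pow_eq_add_mul hb (hab ▸ hr) hMgen hLgen
  set q : K[X] := X ^ 3 - C (3 * γ) * X - C (2 * a) with hq
  have : IsSplittingField K L q := isSplittingField_cubic hω (mul_div_cancel₀ _ hr0) hsum hKr
  have : Normal K L := Normal.of_isSplittingField q
  have hgal : IsGalois K L := ⟨⟩
  have : FiniteDimensional K L := IsSplittingField.finiteDimensional L q
  refine ⟨hgal, hfinrank,
    nonempty_mulEquiv_perm_fin_three_of_isSplittingField q (by rw [hq]; compute_degree) ?_⟩
  rw [IsGalois.card_aut_eq_finrank, hfinrank]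

/-- Let `K` be a field of characteristic zero containing a primitive cube root of unity,
`M = K(s)` with `s² = α` a quadratic extension (`α` not a square in `K`), `σ` the nontrivial
`K`-automorphism of `M`, and `β ∈ Mˣ` not a cube in `M` with `β·σ(β)` a cube in `Kˣ`.
Then `L = M(r)` with `r³ = β` is Galois of degree 6 over `K` with Galois group `S₃`. -/
theorem stmt_8 {K : Type*} [Field K] [CharZero K] (ω : K) (hω : IsPrimitiveRoot ω 3)
    {M : Type*} [Field M] [Algebra K M]
    (α : K) (hα0 : α ≠ 0) (hα : ¬∃ x : K, x ^ 2 = α)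
    (s : M) (hs : s ^ 2 = algebraMap K M α) (hMgen : Algebra.adjoin K {s} = ⊤)
    (σ : M ≃ₐ[K] M) (hσ : σ s = -s)
    {L : Type*} [Field L] [Algebra K L] [Algebra M L] [IsScalarTower K M L]
    (β : M) (hβ0 : β ≠ 0) (hβ : ¬∃ x : M, x ^ 3 = β)
    (hββ : ∃ γ : K, γ ≠ 0 ∧ β * σ β = algebraMap K M γ ^ 3)
    (r : L) (hr : r ^ 3 = algebraMap M L β) (hLgen : Algebra.adjoin M {r} = ⊤) :
    IsGalois K L ∧ Module.finrank K L = 6 ∧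
      Nonempty ((L ≃ₐ[K] L) ≃* Equiv.Perm (Fin 3)) :=
  stmt_8_general ω hω α hα s hs hMgen σ hσ β hβ hββ r hr hLgen
end

section
/- Let K be a field of characteristic zero containing a primitive cube root of unity, and let L be a finite Galois field extension of K with Gal(L/K) isomorphic to the symmetric group S₃. Then there exist α ∈ K^× not a square in K, an element s ∈ L with s² = α, an element β ∈ K(s)^× that is not a cube in K(s) and satisfies β·σ(β) ∈ (K^×)³ (where σ is the nontrivial K-automorphism of K(s)), and an element r ∈ L with r³ = β, such that L = K(s, r). -/
/-!
Let `H` be the preimage of `A₃` in `Gal(L/K) ≃ S₃`. Its fixed field has degree `2`, so it is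
`K(s)` with `s² = α ∈ K`, and `L/K(s)` is cyclic of degree `3`; as `ω ∈ K`, Kummer theory gives
`L = K(s, r)` with `r³ = β ∈ K(s)`. Pick `τ ∉ H`. Each `g ∈ H` multiplies `r` by a power of `ω`
and satisfies `g τ g = τ`, which makes `r · τ(r)` fixed by `H` and by `τ`, hence by the whole
Galois group. So `r · τ(r) = γ ∈ K` and `β σ(β) = γ³`.
-/

open IntermediateField Module Polynomial

theorem IsPrimitiveRoot.exists_eq_pow_mul_of_pow_eq {F : Type*} [Field F] {n : ℕ} [NeZero n]
    {ζ : F} (hζ : IsPrimitiveRoot ζ n) {a b : F} (hb : b ≠ 0) (hab : a ^ n = b ^ n) :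
    ∃ k, a = ζ ^ k * b := by
  obtain ⟨k, -, hk⟩ := hζ.eq_pow_of_pow_eq_one (ξ := a / b)
    (by rw [div_pow, hab, div_self (pow_ne_zero n hb)])
  exact ⟨k, by rw [hk, div_mul_cancel₀ a hb]⟩

theorem not_exists_pow_eq_of_notMem_range {E L : Type*} [Field E] [Field L] [Algebra E L]
    {n : ℕ} [NeZero n] {ζ : E} (hζ : IsPrimitiveRoot ζ n) {r : L} {β : E}
    (hr : r ^ n = algebraMap E L β) (hrE : r ∉ Set.range (algebraMap E L)) :
    ¬∃ x : E, x ^ n = β := by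
  rintro ⟨x, rfl⟩
  have hx : algebraMap E L x ≠ 0 := by
    intro hx
    rw [map_pow, hx, zero_pow (NeZero.ne n), pow_eq_zero_iff (NeZero.ne n)] at hr
    exact hrE ⟨0, by rw [hr, map_zero]⟩
  obtain ⟨k, hk⟩ := (hζ.map_of_injective (algebraMap E L).injective).exists_eq_pow_mul_of_pow_eq
    hx (by rw [hr, map_pow])
  exact hrE ⟨ζ ^ k * x, by rw [hk, map_mul, map_pow]⟩

theorem Equiv.Perm.mul_mul_eq_of_sign_fin_three {g τ : Equiv.Perm (Fin 3)} (hg : sign g = 1)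
    (hτ : sign τ ≠ 1) : g * τ * g = τ := by
  revert g τ; decide

section Galois

variable {K L : Type*} [Field K] [Field L] [Algebra K L]

theorem IntermediateField.mem_fixingSubgroup_adjoin_simple_iff {s : L} {τ : Gal(L/K)} :
    τ ∈ K⟮s⟯.fixingSubgroup ↔ τ s = s := by
  refine ⟨fun h ↦ h ⟨s, mem_adjoin_simple_self K s⟩, fun h ↦ ?_⟩
  have hext : (τ : L →ₐ[K] L).comp K⟮s⟯.val = K⟮s⟯.val :=
    adjoin_algHom_ext K fun x hx ↦ by obtain rfl := Set.mem_singleton_iff.1 hx; exact h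
  exact (mem_fixingSubgroup_iff _ _).2 fun x hx ↦ DFunLike.congr_fun hext ⟨x, hx⟩

theorem apply_eq_neg_of_notMem_fixingSubgroup {s : L} {α : K} (hs : s ^ 2 = algebraMap K L α)
    {τ : Gal(L/K)} (hτ : τ ∉ K⟮s⟯.fixingSubgroup) : τ s = -s := by
  have hsq : τ s ^ 2 = s ^ 2 := by rw [← map_pow, hs, AlgEquiv.commutes]
  exact (sq_eq_sq_iff_eq_or_eq_neg.1 hsq).resolve_left
    (mt mem_fixingSubgroup_adjoin_simple_iff.2 hτ)

variable [FiniteDimensional K L]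

theorem IntermediateField.adjoin_simple_eq_of_finrank_eq_two {E : IntermediateField K L}
    (hE : finrank K E = 2) {x : L} (hxE : x ∈ E) (hx : x ∉ (⊥ : IntermediateField K L)) :
    K⟮x⟯ = E := by
  have hx1 : finrank K K⟮x⟯ ≠ 1 := by
    rwa [Ne, finrank_eq_one_iff, adjoin_simple_eq_bot_iff]
  refine eq_of_le_of_finrank_le (adjoin_simple_le_iff.2 hxE) ?_
  have := finrank_pos (R := K) (M := K⟮x⟯)
  omega

theorem IntermediateField.exists_sq_eq_algebraMap_adjoin_eq [NeZero (2 : K)]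
    {E : IntermediateField K L} (hE : finrank K E = 2) :
    ∃ s : L, ∃ α : K, s ^ 2 = algebraMap K L α ∧ K⟮s⟯ = E := by
  have hEbot : E ≠ ⊥ := by
    rintro rfl
    rw [IntermediateField.finrank_bot] at hE
    omega
  obtain ⟨t, htE, ht⟩ := SetLike.exists_of_lt (bot_lt_iff_ne_bot.2 hEbot)
  have hint : IsIntegral K t := .of_finite K t
  have hdeg : (minpoly K t).natDegree = 2 := by
    rw [← adjoin.finrank hint, adjoin_simple_eq_of_finrank_eq_two hE htE ht, hE]
  have hmonic : (minpoly K t).coeff 2 = 1 := hdeg ▸ (minpoly.monic hint).coeff_natDegree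
  set b := (minpoly K t).coeff 1
  set c := (minpoly K t).coeff 0
  have hquad : t ^ 2 + algebraMap K L b * t + algebraMap K L c = 0 := by
    have h := minpoly.aeval K t
    rw [aeval_eq_sum_range, hdeg, Finset.sum_range_succ, Finset.sum_range_succ,
      Finset.sum_range_one, hmonic] at h
    simp only [Algebra.smul_def, map_one, pow_zero, pow_one, mul_one, one_mul] at h
    linear_combination h
  have h2 : (2 : L) ≠ 0 := by
    rw [← map_ofNat (algebraMap K L) 2]
    exact (_root_.map_ne_zero _).2 two_ne_zero
  -- completing the square
  set s := 2 * t + algebraMap K L b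
  refine ⟨s, b ^ 2 - 4 * c, ?_, adjoin_simple_eq_of_finrank_eq_two hE ?_ ?_⟩
  · rw [map_sub, map_mul, map_pow, map_ofNat]
    linear_combination 4 * hquad
  · exact add_mem (mul_mem (ofNat_mem E 2) htE) (algebraMap_mem E b)
  · intro hs
    have ht' : t = (2 : L)⁻¹ * (s - algebraMap K L b) := by field_simp; ring
    exact ht (ht' ▸ mul_mem (inv_mem (ofNat_mem _ 2)) (sub_mem hs (algebraMap_mem ⊥ b)))

theorem exists_sq_eq_algebraMap_fixingSubgroup_eq [NeZero (2 : K)] [IsGalois K L]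
    {H : Subgroup Gal(L/K)} (hH : H.index = 2) {τ : Gal(L/K)} (hτ : τ ∉ H) :
    ∃ s : L, ∃ α : K, s ^ 2 = algebraMap K L α ∧ (¬∃ x : K, x ^ 2 = α) ∧
      K⟮s⟯.fixingSubgroup = H ∧ τ s = -s := by
  obtain ⟨s, α, hs, hsH⟩ := exists_sq_eq_algebraMap_adjoin_eq (E := fixedField H)
    (by rw [finrank_eq_fixingSubgroup_index, fixingSubgroup_fixedField, hH])
  have hfix : K⟮s⟯.fixingSubgroup = H := by rw [hsH, fixingSubgroup_fixedField]
  have hneg : IsPrimitiveRoot (-1 : K) 2 := .neg_one (ringChar K) fun h ↦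
    two_ne_zero (by exact_mod_cast h ▸ ringChar.Nat.cast_ringChar : (2 : K) = 0)
  refine ⟨s, α, hs, not_exists_pow_eq_of_notMem_range hneg hs ?_, hfix,
    apply_eq_neg_of_notMem_fixingSubgroup hs (hfix ▸ hτ)⟩
  rintro ⟨a, rfl⟩
  exact hτ (hfix ▸ mem_fixingSubgroup_adjoin_simple_iff.2 (τ.commutes a))

end Galois

section Dihedral

variable {K L : Type*} [Field K] [Field L] [Algebra K L] {n : ℕ} [NeZero n] {ζ : K}
  (hζ : IsPrimitiveRoot ζ n) {H : Subgroup Gal(L/K)} {σ : Gal(L/K)} {r : L}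
include hζ

theorem AlgEquiv.exists_apply_eq_pow_mul (g : Gal(L/K)) (hr : r ≠ 0) (hg : g (r ^ n) = r ^ n) :
    ∃ k, g r = algebraMap K L ζ ^ k * r :=
  (hζ.map_of_injective (algebraMap K L).injective).exists_eq_pow_mul_of_pow_eq hr
    (by rw [← map_pow, hg])

variable (hdih : ∀ g ∈ H, g * σ * g = σ) (hr : r ≠ 0) (hrH : ∀ g ∈ H, g (r ^ n) = r ^ n)
include hdih hr hrH

theorem apply_mul_apply_eq_of_mem {g : Gal(L/K)} (hg : g ∈ H) : g (r * σ r) = r * σ r := by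
  obtain ⟨k, hk⟩ := AlgEquiv.exists_apply_eq_pow_mul hζ g hr (hrH g hg)
  have hσ : σ (g r) = algebraMap K L ζ ^ k * σ r := by
    rw [hk, map_mul, map_pow, AlgEquiv.commutes]
  calc g (r * σ r) = r * g (algebraMap K L ζ ^ k * σ r) := by
        rw [map_mul, hk, map_mul, map_pow g, AlgEquiv.commutes]; ring
    _ = r * (g * σ * g) r := by rw [← hσ]; rfl
    _ = r * σ r := by rw [hdih g hg]

theorem apply_mul_apply_eq_self (hn : Odd n) (hH : H.index = 2) (hσ : σ ∉ H) :
    σ (r * σ r) = r * σ r := by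
  have hσσ : σ * σ ∈ H := (Subgroup.mul_mem_iff_of_index_two hH).2 (iff_of_false hσ hσ)
  obtain ⟨k, hk⟩ := AlgEquiv.exists_apply_eq_pow_mul hζ (σ * σ) hr (hrH _ hσσ)
  set u := algebraMap K L ζ ^ k
  have hu : u ^ n = 1 := by
    rw [← pow_mul, mul_comm, pow_mul, ← map_pow, hζ.pow_eq_one, map_one, one_pow]
  have hσu : σ u = u := by rw [map_pow, AlgEquiv.commutes]
  have hc : σ (r * σ r) = u * (r * σ r) := by
    rw [map_mul, ← AlgEquiv.mul_apply, hk]; ring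
  have hc0 : r * σ r ≠ 0 := mul_ne_zero hr ((map_ne_zero σ).2 hr)
  -- `σ²` fixes `r σ(r)` but multiplies it by `u²`, so `u² = 1 = uⁿ` with `n` odd
  have hu2 : u ^ 2 = 1 := by
    have h := apply_mul_apply_eq_of_mem hζ hdih hr hrH hσσ
    rw [AlgEquiv.mul_apply, hc, map_mul, hσu, hc, ← mul_assoc, ← sq] at h
    exact (mul_eq_right₀ hc0).1 h
  have hu1 : u = 1 := by
    simpa [Nat.Coprime.gcd_eq_one (Nat.coprime_two_left.2 hn)] using pow_gcd_eq_one.2 ⟨hu2, hu⟩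
  rw [hc, hu1, one_mul]

theorem mul_apply_mem_bot [FiniteDimensional K L] [IsGalois K L] (hn : Odd n) (hH : H.index = 2)
    (hσ : σ ∉ H) : r * σ r ∈ (⊥ : IntermediateField K L) := by
  rw [IsGalois.mem_bot_iff_fixed]
  intro g
  by_cases hg : g ∈ H
  · exact apply_mul_apply_eq_of_mem hζ hdih hr hrH hg
  · have hgσ : g * σ⁻¹ ∈ H :=
      (Subgroup.mul_mem_iff_of_index_two hH).2 (iff_of_false hg (by rwa [inv_mem_iff]))
    calc g (r * σ r) = (g * σ⁻¹) (σ (r * σ r)) := by simp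
      _ = r * σ r := by
        rw [apply_mul_apply_eq_self hζ hdih hr hrH hn hH hσ,
          apply_mul_apply_eq_of_mem hζ hdih hr hrH hgσ]

end Dihedral

theorem exists_pow_mem_range_adjoin_eq_top {E L : Type*} [Field E] [Field L] [Algebra E L]
    [FiniteDimensional E L] [IsGalois E L] {p : ℕ} (hp : p.Prime) (hEL : finrank E L = p)
    {ζ : E} (hζ : IsPrimitiveRoot ζ p) :
    ∃ r : L, r ^ p ∈ Set.range (algebraMap E L) ∧ r ∉ Set.range (algebraMap E L) ∧
      E⟮r⟯ = ⊤ := by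
  have : Fact p.Prime := ⟨hp⟩
  have : IsCyclic Gal(L/E) :=
    isCyclic_of_prime_card (p := p) (by rw [IsGalois.card_aut_eq_finrank, hEL])
  obtain ⟨r, hr, htop⟩ := exists_root_adjoin_eq_top_of_isCyclic E L
    ⟨ζ, (mem_primitiveRoots (hEL ▸ hp.pos)).2 (hEL ▸ hζ)⟩
  refine ⟨r, hEL ▸ hr, fun hrE ↦ hp.one_lt.ne ?_, htop⟩
  rw [← mem_bot, ← adjoin_simple_eq_bot_iff, htop] at hrE
  rw [← hEL, ← finrank_top', hrE, IntermediateField.finrank_bot]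

theorem exists_subgroup_of_mulEquiv_perm_fin_three {G : Type*} [Group G]
    (e : G ≃* Equiv.Perm (Fin 3)) :
    ∃ H : Subgroup G, ∃ τ ∉ H, H.index = 2 ∧ Nat.card H = 3 ∧ ∀ g ∈ H, g * τ * g = τ := by
  set H := (alternatingGroup (Fin 3)).comap e.toMonoidHom
  have hH : H.index = 2 := by
    rw [Subgroup.index_comap_of_surjective _ e.surjective, alternatingGroup.index_eq_two]
  obtain ⟨τ, -, hτ⟩ := SetLike.exists_of_lt (lt_top_iff_ne_top.2 fun h : H = ⊤ ↦ by
    rw [h, Subgroup.index_top] at hH; omega)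
  refine ⟨H, τ, hτ, hH, ?_, fun g hg ↦ e.injective ?_⟩
  · have h := H.card_mul_index
    rw [hH, Nat.card_congr e.toEquiv, Nat.card_perm, Nat.card_fin] at h
    simp only [Nat.factorial] at h
    omega
  · simp only [H, Subgroup.mem_comap, Equiv.Perm.mem_alternatingGroup] at hg hτ
    simpa using Equiv.Perm.mul_mul_eq_of_sign_fin_three hg hτ

/-- Every finite Galois extension `L/K` (char 0, `K` containing a primitive cube root of
unity) with Galois group `S₃` has the form `L = K(s, r)` with `s² = α ∈ K` not a square,
`r³ = β ∈ K(s)` not a cube, and `β·σ(β)` a cube in `Kˣ`, where `σ` is the nontrivial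
`K`-automorphism of `K(s)`. -/
theorem stmt_9 {K : Type*} [Field K] [CharZero K] (ω : K) (hω : IsPrimitiveRoot ω 3)
    {L : Type*} [Field L] [Algebra K L] [FiniteDimensional K L] [IsGalois K L]
    (hGal : Nonempty ((L ≃ₐ[K] L) ≃* Equiv.Perm (Fin 3))) :
    ∃ α : K, α ≠ 0 ∧ (¬∃ x : K, x ^ 2 = α) ∧
      ∃ s : L, s ^ 2 = algebraMap K L α ∧
        ∃ σ : K⟮s⟯ ≃ₐ[K] K⟮s⟯,
          σ ⟨s, mem_adjoin_simple_self K s⟩ = -⟨s, mem_adjoin_simple_self K s⟩ ∧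
          ∃ β : K⟮s⟯, β ≠ 0 ∧ (¬∃ x : K⟮s⟯, x ^ 3 = β) ∧
            (∃ γ : K, γ ≠ 0 ∧ β * σ β = algebraMap K K⟮s⟯ γ ^ 3) ∧
            ∃ r : L, r ^ 3 = (β : L) ∧ IntermediateField.adjoin K {s, r} = ⊤ := by
  obtain ⟨H, τ, hτ, hH2, hH3, hdih⟩ := exists_subgroup_of_mulEquiv_perm_fin_three hGal.some
  obtain ⟨s, α, hs, hαsq, hfix, hτs⟩ := exists_sq_eq_algebraMap_fixingSubgroup_eq hH2 hτ
  have := Subgroup.normal_of_index_eq_two hH2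
  have : Normal K K⟮s⟯ := by
    rw [← IsGalois.fixedField_fixingSubgroup K⟮s⟯, hfix]; infer_instance
  have hωs := hω.map_of_injective (algebraMap K K⟮s⟯).injective
  obtain ⟨r, ⟨β, hβ⟩, hrs, htop⟩ := exists_pow_mem_range_adjoin_eq_top Nat.prime_three
    (by rw [← IsGalois.card_fixingSubgroup_eq_finrank, hfix, hH3]) hωs
  have hr0 : r ≠ 0 := fun h ↦ hrs ⟨0, by rw [h, map_zero]⟩
  have hrH : ∀ g ∈ H, g (r ^ 3) = r ^ 3 := fun g hg ↦ by
    rw [← hβ]; exact (IntermediateField.mem_fixingSubgroup_iff _ g).1 (hfix ▸ hg) β β.2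
  obtain ⟨γ, hγ⟩ := mem_bot.1
    (mul_apply_mem_bot hω hdih hr0 hrH (by decide) hH2 hτ)
  refine ⟨α, fun h ↦ hαsq ⟨0, by rw [h]; ring⟩, hαsq, s, hs, τ.restrictNormal K⟮s⟯,
    Subtype.ext (by simp [AlgEquiv.restrictNormal_apply, hτs]), β, ?_,
    not_exists_pow_eq_of_notMem_range hωs hβ.symm hrs, ⟨γ, ?_, ?_⟩, r, hβ.symm, ?_⟩
  · rintro rfl
    exact hr0 (pow_eq_zero_iff three_ne_zero |>.1 (by rw [← hβ, map_zero]))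
  · rintro rfl
    exact mul_ne_zero hr0 ((map_ne_zero τ).2 hr0) (by rw [← hγ, map_zero])
  · have hβ' : (β : L) = r ^ 3 := hβ
    apply Subtype.ext
    simp only [MulMemClass.coe_mul, AlgEquiv.restrictNormal_apply, hβ', SubmonoidClass.coe_pow,
      coe_algebraMap_apply, hγ, map_pow]
    ring
  · rw [Set.insert_eq, ← adjoin_adjoin_left, htop, restrictScalars_top]
end

section
/- Let M = ℂ(t)(s) be the quadratic extension of the rational function field ℂ(t) obtained by adjoining an element s with s² = 1 - t³ (which is not a square in ℂ(t)). Then the element β = 1 + s is not a cube in M; moreover β·σ(β) = (1 + s)(1 - s) = t³ is a cube in ℂ(t)^×, where σ is the nontrivial ℂ(t)-automorphism of M (sending s to -s). Hence the triple α = 1 - t³, β = 1 + s satisfies: α ∈ ℂ(t)^× is not a square, β ∈ M^× is not a cube, and β·σ(β) ∈ (ℂ(t)^×)³. -/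
/-! If `x³ = 1 + s`, then `σ x` is a cube root of `1 - s`, so the trace `p = x + σ x` and the
norm `q = x σ x`, which lie in `ℂ(t)`, satisfy `q³ = (1 + s)(1 - s) = t³` and
`p³ - 3qp = x³ + (σ x)³ = 2`. Both are integral over the integrally closed ring `ℂ[t]`, hence
polynomials; `q` has degree one, and comparing degrees in `p³ = 3qp + 2` forces `p` to be a
constant and then `q` too, a contradiction. That `1 - t³` is not a square is the parity of its
degree. -/

open Polynomial

namespace Polynomial

theorem natDegree_one_sub_X_pow_three {R : Type*} [CommRing R] [Nontrivial R] :
    (1 - X ^ 3 : R[X]).natDegree = 3 := by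
  compute_degree!

variable {R : Type*} [CommRing R] [IsDomain R]

theorem natDegree_eq_one_of_pow_three_eq_X_pow_three {Q : R[X]} (hQ : Q ^ 3 = X ^ 3) :
    Q.natDegree = 1 := by
  have h := congrArg natDegree hQ
  rw [natDegree_pow, natDegree_pow, natDegree_X] at h
  omega

theorem pow_three_sub_ne_two [CharZero R] {P Q : R[X]} (hQ : Q.natDegree = 1) :
    P ^ 3 - 3 * Q * P ≠ 2 := by
  intro hP
  obtain hP0 | hPpos := P.natDegree.eq_zero_or_pos
  · obtain ⟨c, rfl⟩ := natDegree_eq_zero.mp hP0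
    have hc : c ≠ 0 := by rintro rfl; norm_num at hP
    have hconst : C (3 * c) * Q = C (c ^ 3 - 2) := by
      simp only [map_mul, map_sub, map_pow, map_ofNat]
      linear_combination -hP
    have h := congrArg natDegree hconst
    rw [natDegree_C_mul (by simpa using hc), natDegree_C, hQ] at h
    exact one_ne_zero h
  · have hcube : (P ^ 3).natDegree = 3 * P.natDegree := natDegree_pow P 3
    have hlin : (3 * Q * P + 2).natDegree ≤ P.natDegree + 1 := by
      refine (natDegree_add_le _ _).trans (max_le ?_ (by simp))
      have h3Q : (3 * Q).natDegree ≤ 1 := natDegree_mul_le.trans (by simp [hQ])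
      exact natDegree_mul_le.trans (by omega)
    rw [show P ^ 3 = 3 * Q * P + 2 by linear_combination hP] at hcube
    omega

end Polynomial

namespace RatFunc

variable {K : Type*} [Field K]

theorem sq_ne_algebraMap_of_odd_natDegree {p : K[X]} (hp : Odd p.natDegree) (f : RatFunc K) :
    f ^ 2 ≠ algebraMap K[X] (RatFunc K) p := by
  intro hf
  have hp0 : p ≠ 0 := by rintro rfl; simp at hp
  have hf0 : f ≠ 0 := by rintro rfl; exact RatFunc.algebraMap_ne_zero hp0 (by simpa using hf.symm)
  have h := congrArg intDegree hf
  rw [pow_two, intDegree_mul hf0 hf0, intDegree_polynomial] at h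
  obtain ⟨k, hk⟩ := hp
  omega

theorem sq_ne_one_sub_X_pow_three (f : RatFunc K) : f ^ 2 ≠ 1 - X ^ 3 := by
  have h := sq_ne_algebraMap_of_odd_natDegree (by rw [natDegree_one_sub_X_pow_three]; decide) f
  simpa [algebraMap_X] using h

theorem pow_three_sub_ne_two_of_pow_three_eq_X_pow_three [CharZero K] {p q : RatFunc K}
    (hq : q ^ 3 = X ^ 3) : p ^ 3 - 3 * q * p ≠ 2 := by
  intro hp
  set ψ := algebraMap K[X] (RatFunc K)
  have hψ : Function.Injective ψ := algebraMap_injective K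
  obtain ⟨Q, rfl⟩ : ∃ Q : K[X], ψ Q = q := by
    refine IsIntegrallyClosed.isIntegral_iff.mp
      ⟨Polynomial.X ^ 3 - Polynomial.C (Polynomial.X ^ 3 : K[X]),
        monic_X_pow_sub (by compute_degree!), ?_⟩
    simp [hq, algebraMap_X]
  obtain ⟨P, rfl⟩ : ∃ P : K[X], ψ P = p := by
    refine IsIntegrallyClosed.isIntegral_iff.mp
      ⟨Polynomial.X ^ 3 - (Polynomial.C (3 * Q) * Polynomial.X + 2),
        monic_X_pow_sub (by compute_degree!), ?_⟩
    simp only [eval₂_sub, eval₂_add, eval₂_mul, eval₂_X_pow, eval₂_X, eval₂_C, eval₂_ofNat,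
      map_mul, map_ofNat]
    linear_combination hp
  have hQ : Q ^ 3 = Polynomial.X ^ 3 := hψ (by simpa [ψ, algebraMap_X] using hq)
  exact Polynomial.pow_three_sub_ne_two (natDegree_eq_one_of_pow_three_eq_X_pow_three hQ)
    (hψ (by simpa [ψ, map_ofNat] using hp))

end RatFunc

section QuadraticExtension

variable {K L : Type*} [Field K] [CommRing L] [Algebra K L] {s : L} {u : K}

theorem exists_eq_algebraMap_add_algebraMap_mul (hs : s ^ 2 = algebraMap K L u)
    (hgen : Algebra.adjoin K {s} = ⊤) (x : L) :
    ∃ a b : K, x = algebraMap K L a + algebraMap K L b * s := by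
  have hx : x ∈ Algebra.adjoin K {s} := hgen ▸ Algebra.mem_top
  induction hx using Algebra.adjoin_induction with
  | mem y hy => exact ⟨0, 1, by simp [Set.mem_singleton_iff.mp hy]⟩
  | algebraMap r => exact ⟨r, 0, by simp⟩
  | add y z _ _ ihy ihz =>
    obtain ⟨a, b, rfl⟩ := ihy
    obtain ⟨c, d, rfl⟩ := ihz
    exact ⟨a + c, b + d, by simp only [map_add]; ring⟩
  | mul y z _ _ ihy ihz =>
    obtain ⟨a, b, rfl⟩ := ihy
    obtain ⟨c, d, rfl⟩ := ihz
    refine ⟨a * c + b * d * u, a * d + b * c, ?_⟩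
    simp only [map_add, map_mul]
    linear_combination (algebraMap K L b * algebraMap K L d) * hs

theorem exists_add_conj_eq_algebraMap_and_mul_conj_eq_algebraMap
    (hs : s ^ 2 = algebraMap K L u) (hgen : Algebra.adjoin K {s} = ⊤)
    (σ : L →ₐ[K] L) (hσ : σ s = -s) (x : L) :
    ∃ p q : K, x + σ x = algebraMap K L p ∧ x * σ x = algebraMap K L q := by
  obtain ⟨a, b, rfl⟩ := exists_eq_algebraMap_add_algebraMap_mul hs hgen x
  refine ⟨2 * a, a ^ 2 - b ^ 2 * u, ?_, ?_⟩
  · simp only [map_add, map_mul, AlgHom.commutes, hσ, map_ofNat]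
    ring
  · simp only [map_add, map_mul, map_sub, map_pow, AlgHom.commutes, hσ]
    linear_combination -(algebraMap K L b) ^ 2 * hs

end QuadraticExtension

section RatFuncExtension

variable {K M : Type*} [Field K] [CommRing M] [Algebra (RatFunc K) M] {s : M}

theorem one_add_mul_map_one_add_eq_algebraMap_X_pow_three
    (hs : s ^ 2 = algebraMap (RatFunc K) M (1 - RatFunc.X ^ 3))
    (σ : M →ₐ[RatFunc K] M) (hσ : σ s = -s) :
    (1 + s) * σ (1 + s) = algebraMap (RatFunc K) M (RatFunc.X ^ 3) := by
  rw [map_add, map_one, hσ, map_pow]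
  rw [map_sub, map_one, map_pow] at hs
  linear_combination -hs

theorem not_exists_pow_three_eq_one_add [CharZero K] [Nontrivial M]
    (hs : s ^ 2 = algebraMap (RatFunc K) M (1 - RatFunc.X ^ 3))
    (hgen : Algebra.adjoin (RatFunc K) {s} = ⊤) (σ : M →ₐ[RatFunc K] M) (hσ : σ s = -s) :
    ¬∃ x : M, x ^ 3 = 1 + s := by
  rintro ⟨x, hx⟩
  obtain ⟨p, q, hp, hq⟩ :=
    exists_add_conj_eq_algebraMap_and_mul_conj_eq_algebraMap hs hgen σ hσ x
  have hσx : σ x ^ 3 = σ (1 + s) := by rw [← map_pow, hx]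
  have htrace : algebraMap (RatFunc K) M (p ^ 3 - 3 * q * p) = algebraMap (RatFunc K) M 2 := by
    rw [map_sub, map_mul, map_mul, map_pow, map_ofNat, map_ofNat, ← hp, ← hq]
    rw [map_add, map_one, hσ] at hσx
    linear_combination hx + hσx
  have hnorm : algebraMap (RatFunc K) M (q ^ 3) = algebraMap (RatFunc K) M (RatFunc.X ^ 3) := by
    rw [map_pow, ← hq, mul_pow, hx, hσx,
      one_add_mul_map_one_add_eq_algebraMap_X_pow_three hs σ hσ]
  have hinj := (algebraMap (RatFunc K) M).injective
  exact RatFunc.pow_three_sub_ne_two_of_pow_three_eq_X_pow_three (hinj hnorm) (hinj htrace)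

end RatFuncExtension

/-- In the quadratic extension `M = ℂ(t)(s)` with `s² = 1 - t³`, the element `β = 1 + s` is
nonzero and not a cube, while `β·σ(β) = t³` is a cube in `ℂ(t)ˣ` (where `σ(s) = -s`); and
`α = 1 - t³` is not a square in `ℂ(t)`. -/
theorem stmt_11 {M : Type*} [Field M] [Algebra (RatFunc ℂ) M]
    (s : M) (hs : s ^ 2 = algebraMap (RatFunc ℂ) M (1 - RatFunc.X ^ 3))
    (hgen : Algebra.adjoin (RatFunc ℂ) {s} = ⊤)
    (σ : M ≃ₐ[RatFunc ℂ] M) (hσ : σ s = -s) :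
    (1 + s ≠ 0) ∧
    (¬∃ x : M, x ^ 3 = 1 + s) ∧
    (1 + s) * σ (1 + s) = algebraMap (RatFunc ℂ) M (RatFunc.X ^ 3) ∧
    (∃ γ : RatFunc ℂ, γ ≠ 0 ∧ (1 + s) * σ (1 + s) = algebraMap (RatFunc ℂ) M (γ ^ 3)) ∧
    (¬∃ f : RatFunc ℂ, f ^ 2 = 1 - RatFunc.X ^ 3) := by
  have hnorm :=
    one_add_mul_map_one_add_eq_algebraMap_X_pow_three hs (σ : M →ₐ[RatFunc ℂ] M) hσ
  refine ⟨fun h ↦ ?_, not_exists_pow_three_eq_one_add hs hgen σ hσ, hnorm,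
    ⟨RatFunc.X, RatFunc.X_ne_zero, hnorm⟩,
    fun ⟨f, hf⟩ ↦ RatFunc.sq_ne_one_sub_X_pow_three f hf⟩
  refine RatFunc.sq_ne_one_sub_X_pow_three 1 ((algebraMap (RatFunc ℂ) M).injective ?_)
  rw [← hs, eq_neg_of_add_eq_zero_right h]
  simp
end

section
/- Let K be a field of characteristic zero equipped with a δ-operator d (an additive map d : K → K with d(xy) = d(x)y + x d(y)), and let L be a finite field extension of K. Then there exists a unique δ-operator D : L → L (additive, with D(xy) = D(x)y + x D(y) for all x, y ∈ L) extending d, i.e., satisfying D(a) = d(a) for all a in the image of K in L. Thus any finite field extension of a differential field of characteristic zero uniquely turns into an extension of differential fields. -/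
/-!
By the primitive element theorem `L = K(α)` with `α` separable over `K`, so the derivative `p'` of
the minimal polynomial `p` of `α` does not vanish at `α`. Differentiating `p(α) = 0` forces
`D α = -pᵈ(α) / p'(α)`, where `pᵈ` is `p` with `d` applied to its coefficients; this gives
uniqueness, and conversely this value is compatible with `p(α) = 0` and so defines `D`
on `K[X]/(p) ≅ L`.
-/

open Differential

def Derivation.ofAddLeibniz {R : Type*} [CommRing R] (D : R → R)
    (hadd : ∀ x y, D (x + y) = D x + D y) (hmul : ∀ x y, D (x * y) = D x * y + x * D y) :
    Derivation ℤ R R :=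
  Derivation.mk' (AddMonoidHom.mk' D hadd).toIntLinearMap fun a b => by
    simp only [AddMonoidHom.coe_toIntLinearMap, AddMonoidHom.mk'_apply, smul_eq_mul, hmul]
    ring

theorem Derivation.existsUnique_extension_of_finiteDimensional {F K : Type*} [Field F]
    [CharZero F] [Field K] [Algebra F K] [FiniteDimensional F K] (d : Derivation ℤ F F) :
    ∃! D : Derivation ℤ K K, ∀ a : F, D (algebraMap F K a) = algebraMap F K (d a) := by
  let _ : Differential F := ⟨d⟩
  refine ⟨(differentialFiniteDimensional F K).deriv,
    differentialAlgebraFiniteDimensional.deriv_algebraMap, fun D hD => ?_⟩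
  let _ : Differential K := ⟨D⟩
  have : DifferentialAlgebra F K := ⟨hD⟩
  let _ := uniqueDifferentialAlgebraFiniteDimensional (F := F) (K := K)
  exact congrArg (fun s : {_a : Differential K // DifferentialAlgebra F K} => s.1.deriv)
    (Unique.eq_default ⟨_, this⟩)

/-- A finite field extension `L` of a differential field `(K, d)` of characteristic zero
carries a unique δ-operator extending `d`. -/
theorem stmt_18 {K : Type*} [Field K] [CharZero K]
    (d : K → K) (hadd : ∀ x y : K, d (x + y) = d x + d y)
    (hmul : ∀ x y : K, d (x * y) = d x * y + x * d y)
    {L : Type*} [Field L] [Algebra K L] [FiniteDimensional K L] :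
    ∃! D : L → L,
      (∀ x y : L, D (x + y) = D x + D y) ∧
      (∀ x y : L, D (x * y) = D x * y + x * D y) ∧
      (∀ a : K, D (algebraMap K L a) = algebraMap K L (d a)) := by
  obtain ⟨D, hD, huniq⟩ :=
    Derivation.existsUnique_extension_of_finiteDimensional (K := L) (.ofAddLeibniz d hadd hmul)
  refine ⟨D, ⟨D.map_add, fun x y => ?_, hD⟩, fun D' ⟨hadd', hmul', hD'⟩ => ?_⟩
  · rw [D.leibniz, smul_eq_mul, smul_eq_mul]
    ring
  · exact congrArg DFunLike.coe (huniq (.ofAddLeibniz D' hadd' hmul') hD')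
end
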